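/- arXiv:2206.10293 — 8 statements merged into one kernel-verified Lean document; each statement's English description precedes it below -/
import Mathlib

section
/- Let P be a finite poset and x an element of P. Then the number of down-sets of P equals the number of down-sets of P with x removed, plus the number of down-sets of the subposet of P induced on the complement of the union of the principal down-set and principal up-set of x. -/
/-- Number of down-sets of a poset. -/
noncomputable def dCount (α : Type*) [Preorder α] : ℕ := Nat.card {D : Set α // IsLowerSet D}

theorem stmt0 {α : Type*} [Fintype α] [PartialOrder α] (x : α) :
    dCount α = dCount {y : α // y ≠ x} + dCount {y : α // ¬ (y ≤ x) ∧ ¬ (x ≤ y)} := by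
  classical
  let e : {D : Set α // IsLowerSet D} ≃
      ({D : Set {y : α // y ≠ x} // IsLowerSet D} ⊕
       {D : Set {y : α // ¬ (y ≤ x) ∧ ¬ (x ≤ y)} // IsLowerSet D}) :=
  { toFun := fun D =>
      if h : x ∈ D.1 ∧ ∀ y ∈ D.1, x ≤ y → y = x then
        Sum.inr ⟨{z | (z : α) ∈ D.1}, fun a b hab ha => D.2 hab ha⟩
      else
        Sum.inl ⟨{y | (y : α) ∈ D.1}, fun a b hab ha => D.2 hab ha⟩
    invFun := Sum.elim
      (fun D =>
        if h : ∃ y ∈ D.1, x ≤ (y : α) then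
          ⟨{a | a = x ∨ ∃ ha : a ≠ x, (⟨a, ha⟩ : {y : α // y ≠ x}) ∈ D.1}, by
            rintro a b hba (ha | ⟨ha, haD⟩)
            · by_cases hb : b = x
              · exact Or.inl hb
              · obtain ⟨y, hyD, hxy⟩ := h
                exact Or.inr ⟨hb, D.2 (show (b : α) ≤ (y : α) from
                  le_trans (ha ▸ hba) hxy) hyD⟩
            · by_cases hb : b = x
              · exact Or.inl hb
              · exact Or.inr ⟨hb, D.2 (show (b : α) ≤ a from hba) haD⟩⟩
        else
          ⟨{a | ∃ ha : a ≠ x, (⟨a, ha⟩ : {y : α // y ≠ x}) ∈ D.1}, by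
            rintro a b hba ⟨ha, haD⟩
            by_cases hb : b = x
            · exact absurd ⟨⟨a, ha⟩, haD, hb ▸ hba⟩ h
            · exact ⟨hb, D.2 (show (b : α) ≤ a from hba) haD⟩⟩)
      (fun E =>
        ⟨{a | a ≤ x ∨ ∃ ha : ¬ (a ≤ x) ∧ ¬ (x ≤ a),
            (⟨a, ha⟩ : {y : α // ¬ (y ≤ x) ∧ ¬ (x ≤ y)}) ∈ E.1}, by
          rintro a b hba (hax | ⟨ha, haE⟩)
          · exact Or.inl (le_trans hba hax)
          · by_cases hbx : b ≤ x
            · exact Or.inl hbx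
            · have hxb : ¬ x ≤ b := fun hxb => ha.2 (le_trans hxb hba)
              exact Or.inr ⟨⟨hbx, hxb⟩, E.2 (show (b : α) ≤ a from hba) haE⟩⟩)
    left_inv := by
      rintro ⟨D, hD⟩
      dsimp only
      split_ifs with h
      · simp only [Sum.elim_inr]
        apply Subtype.ext
        ext a
        simp only [Set.mem_setOf_eq]
        constructor
        · rintro (hax | ⟨ha, haD⟩)
          · exact hD hax h.1
          · exact haD
        · intro haD
          by_cases hax : a ≤ x
          · exact Or.inl hax
          · refine Or.inr ⟨⟨hax, fun hxa => hax ?_⟩, haD⟩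
            have := h.2 a haD hxa
            exact this ▸ le_refl a
      · simp only [Sum.elim_inl]
        split_ifs with h2
        · apply Subtype.ext
          ext a
          simp only [Set.mem_setOf_eq]
          constructor
          · rintro (ha | ⟨ha, haD⟩)
            · subst ha
              obtain ⟨y, hyD, hxy⟩ := h2
              exact hD hxy hyD
            · exact haD
          · intro haD
            by_cases ha : a = x
            · exact Or.inl ha
            · exact Or.inr ⟨ha, haD⟩
        · have hxD : x ∉ D := by
            intro hxD
            apply h
            refine ⟨hxD, fun y hyD hxy => ?_⟩
            by_contra hyx
            exact h2 ⟨⟨y, hyx⟩, hyD, hxy⟩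
          apply Subtype.ext
          ext a
          simp only [Set.mem_setOf_eq]
          constructor
          · rintro ⟨ha, haD⟩; exact haD
          · intro haD
            exact ⟨fun h' => hxD (h' ▸ haD), haD⟩
    right_inv := by
      rintro (⟨D, hD⟩ | ⟨E, hE⟩)
      · simp only [Sum.elim_inl]
        split_ifs with h2 hcond hcond
        · -- h2 : ∃ y ∈ D, x ≤ y ; hcond : doubling holds -- contradiction
          exfalso
          obtain ⟨y, hyD, hxy⟩ := h2
          exact y.2 (hcond.2 y (Or.inr ⟨y.2, hyD⟩) hxy)
        · congr 1
          apply Subtype.ext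
          ext y
          simp only [Set.mem_setOf_eq]
          constructor
          · rintro (hy | ⟨hy, hyD⟩)
            · exact absurd hy y.2
            · exact hyD
          · intro hyD
            exact Or.inr ⟨y.2, hyD⟩
        · exfalso
          obtain ⟨hx, -⟩ := hcond.1
          exact hx rfl
        · congr 1
          apply Subtype.ext
          ext y
          simp only [Set.mem_setOf_eq]
          exact ⟨fun ⟨hy, hyD⟩ => hyD, fun hyD => ⟨y.2, hyD⟩⟩
      · simp only [Sum.elim_inr]
        split_ifs with hcond
        · congr 1
          apply Subtype.ext
          ext z
          simp only [Set.mem_setOf_eq]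
          constructor
          · rintro (hz | ⟨hz, hzE⟩)
            · exact absurd hz z.2.1
            · exact hzE
          · intro hzE
            exact Or.inr ⟨z.2, hzE⟩
        · exfalso
          apply hcond
          refine ⟨Or.inl le_rfl, fun y hy hxy => ?_⟩
          rcases hy with hyx | ⟨hy, -⟩
          · exact le_antisymm hyx hxy
          · exact absurd hxy hy.2 }
  rw [dCount, Nat.card_congr e, Nat.card_sum]
  rfl
end

section
/- Let P be a finite poset on carrier X and M ⊆ X. For each down-set N of P|_M, define M↕N := ↑(M\N) ∪ ↓N (arrows in P). Then the map D ↦ D \ ↓N is an order isomorphism (with respect to set inclusion) from the set of down-sets D of P with D ∩ M = N onto the set of down-sets of the induced subposet P − M↕N, with inverse D' ↦ D' ∪ ↓N. -/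
theorem stmt2 {α : Type*} [Fintype α] [PartialOrder α] (M N : Set α)
    (hNM : N ⊆ M) (hN : ∀ x ∈ M, ∀ y ∈ N, x ≤ y → x ∈ N) :
    ∃ e : {D : Set α // IsLowerSet D ∧ D ∩ M = N} ≃o
        {E : Set α // E ⊆ ((upperClosure (M \ N) : Set α) ∪ (lowerClosure N : Set α))ᶜ ∧
          ∀ x ∈ ((upperClosure (M \ N) : Set α) ∪ (lowerClosure N : Set α))ᶜ,
            ∀ y ∈ E, x ≤ y → x ∈ E},
      (∀ D, (e D : Set α) = (D : Set α) \ (lowerClosure N : Set α)) ∧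
      (∀ E, (e.symm E : Set α) = (E : Set α) ∪ (lowerClosure N : Set α)) := by
  classical
  set K : Set α := (lowerClosure N : Set α) with hK
  set U : Set α := (upperClosure (M \ N) : Set α) with hU
  -- K ⊆ D for any admissible D
  have hKsub : ∀ D : Set α, IsLowerSet D → D ∩ M = N → K ⊆ D := by
    intro D hD hDM x hx
    obtain ⟨n, hn, hxn⟩ := hx
    have : n ∈ D := by
      have : n ∈ D ∩ M := hDM ▸ hn
      exact this.1
    exact hD hxn this
  have fwd : ∀ D : Set α, IsLowerSet D → D ∩ M = N →
      (D \ K ⊆ (U ∪ K)ᶜ ∧ ∀ x ∈ (U ∪ K)ᶜ, ∀ y ∈ D \ K, x ≤ y → x ∈ D \ K) := by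
    intro D hD hDM
    constructor
    · rintro x ⟨hxD, hxK⟩ hx
      rcases hx with hx | hx
      · obtain ⟨m, hm, hmx⟩ := hx
        have hmD : m ∈ D := hD hmx hxD
        have : m ∈ N := by rw [← hDM]; exact ⟨hmD, hm.1⟩
        exact hm.2 this
      · exact hxK hx
    · rintro x hx y ⟨hyD, _⟩ hxy
      refine ⟨hD hxy hyD, fun hxK => hx (Or.inr hxK)⟩
  have bwd : ∀ E : Set α, E ⊆ (U ∪ K)ᶜ →
      (∀ x ∈ (U ∪ K)ᶜ, ∀ y ∈ E, x ≤ y → x ∈ E) →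
      (IsLowerSet (E ∪ K) ∧ (E ∪ K) ∩ M = N) := by
    intro E hEsub hE
    constructor
    · intro y x hxy hy
      rcases hy with hy | hy
      · by_cases hx : x ∈ (U ∪ K)ᶜ
        · exact Or.inl (hE x hx y hy hxy)
        · rcases (not_not.mp (by simpa [Set.mem_compl_iff] using hx) : x ∈ U ∪ K) with h | h
          · obtain ⟨m, hm, hmx⟩ := h
            exfalso
            exact hEsub hy (Or.inl ⟨m, hm, hmx.trans hxy⟩)
          · exact Or.inr h
      · exact Or.inr ((lowerClosure N).lower hxy hy)
    · ext x
      constructor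
      · rintro ⟨hx | hx, hxM⟩
        · by_contra hxN
          exact hEsub hx (Or.inl ⟨x, ⟨hxM, hxN⟩, le_refl x⟩)
        · obtain ⟨n, hn, hxn⟩ := hx
          exact hN x hxM n hn hxn
      · intro hx
        exact ⟨Or.inr (subset_lowerClosure hx), hNM hx⟩
  refine ⟨{
    toFun := fun D => ⟨D.1 \ K, (fwd D.1 D.2.1 D.2.2).1, (fwd D.1 D.2.1 D.2.2).2⟩
    invFun := fun E => ⟨E.1 ∪ K, (bwd E.1 E.2.1 E.2.2).1, (bwd E.1 E.2.1 E.2.2).2⟩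
    left_inv := by
      rintro ⟨D, hD, hDM⟩
      ext x
      simp only [Set.mem_union, Set.mem_diff]
      constructor
      · rintro (⟨h, _⟩ | h)
        · exact h
        · exact hKsub D hD hDM h
      · intro h
        by_cases hx : x ∈ K
        · exact Or.inr hx
        · exact Or.inl ⟨h, hx⟩
    right_inv := by
      rintro ⟨E, hEsub, hE⟩
      ext x
      simp only [Set.mem_diff, Set.mem_union]
      constructor
      · rintro ⟨h | h, hK2⟩
        · exact h
        · exact absurd h hK2
      · intro h
        exact ⟨Or.inl h, fun hK2 => hEsub h (Or.inr hK2)⟩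
    map_rel_iff' := by
      rintro ⟨D, hD, hDM⟩ ⟨D', hD', hDM'⟩
      simp only [Equiv.coe_fn_mk, Subtype.mk_le_mk]
      constructor
      · intro h x hx
        by_cases hxK : x ∈ K
        · exact hKsub D' hD' hDM' hxK
        · exact (h ⟨hx, hxK⟩).1
      · intro h x hx
        exact ⟨h hx.1, hx.2⟩ }, fun D => rfl, fun E => rfl⟩
end

section
/- Let P be a finite poset on carrier X and M ⊆ X. Then the number of down-sets of P equals the sum, over all down-sets N of the induced subposet P|_M, of the number of down-sets of the induced subposet P − (↑(M\N) ∪ ↓N). -/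
open Set

section Aux

variable {α : Type*} [PartialOrder α] (M : Set α)

private abbrev Idx := {N : Set α // N ⊆ M ∧ ∀ x ∈ M, ∀ y ∈ N, x ≤ y → x ∈ N}

private abbrev Comp (N : Idx M) : Set α :=
  ((upperClosure (M \ (N : Set α)) : Set α) ∪ (lowerClosure (N : Set α) : Set α))ᶜ

/-- The fiber map: a down-set `D` maps to `D ∩ M`. -/
private def fib (D : {D : Set α // IsLowerSet D}) : Idx M :=
  ⟨(D : Set α) ∩ M, inter_subset_right,
    fun x hx y hy hxy => ⟨D.2 hxy hy.1, hx⟩⟩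

private def toE (N : Idx M) (D : {D : {D : Set α // IsLowerSet D} // fib M D = N}) :
    {E : Set (↥(Comp M N)) // IsLowerSet E} :=
  ⟨{x : ↥(Comp M N) | (x : α) ∈ (D.1 : Set α)}, fun a b hba ha => D.1.2 hba ha⟩

private def ofESet (N : Idx M) (E : {E : Set (↥(Comp M N)) // IsLowerSet E}) : Set α :=
  (lowerClosure (N : Set α) : Set α) ∪ (Subtype.val '' (E : Set (↥(Comp M N))))

private lemma ofESet_lower (N : Idx M) (E : {E : Set (↥(Comp M N)) // IsLowerSet E}) :
    IsLowerSet (ofESet M N E) := by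
  intro a b hba ha
  rcases ha with ha | ⟨x, hxE, hxa⟩
  · exact Or.inl ((lowerClosure (N : Set α)).lower hba ha)
  · by_cases hbl : b ∈ (lowerClosure (N : Set α) : Set α)
    · exact Or.inl hbl
    · have hxC : (x : α) ∉ (upperClosure (M \ (N : Set α)) : Set α) ∪
          (lowerClosure (N : Set α) : Set α) := x.2
      have hbC : b ∈ Comp M N := by
        intro hb
        rcases hb with ⟨m, hm, hmb⟩ | hb
        · exact hxC (Or.inl ⟨m, hm, hxa ▸ hmb.trans hba⟩)
        · exact hbl hb
      refine Or.inr ⟨⟨b, hbC⟩, E.2 (show (⟨b, hbC⟩ : ↥(Comp M N)) ≤ x from by have h : b ≤ (x : α) := hxa ▸ hba; exact h) hxE, rfl⟩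

private lemma ofESet_inter (N : Idx M) (E : {E : Set (↥(Comp M N)) // IsLowerSet E}) :
    ofESet M N E ∩ M = (N : Set α) := by
  ext a
  constructor
  · rintro ⟨ha | ⟨x, _, hxa⟩, haM⟩
    · rcases ha with ⟨y, hy, hay⟩
      exact N.2.2 a haM y hy hay
    · by_contra haN
      exact x.2 (Or.inl ⟨a, ⟨haM, haN⟩, hxa ▸ le_refl (x : α)⟩)
  · intro ha
    exact ⟨Or.inl (subset_lowerClosure ha), N.2.1 ha⟩

private def ofE (N : Idx M) (E : {E : Set (↥(Comp M N)) // IsLowerSet E}) :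
    {D : {D : Set α // IsLowerSet D} // fib M D = N} :=
  ⟨⟨ofESet M N E, ofESet_lower M N E⟩, Subtype.ext (ofESet_inter M N E)⟩

private def fiberEquiv (N : Idx M) :
    {D : {D : Set α // IsLowerSet D} // fib M D = N} ≃
      {E : Set (↥(Comp M N)) // IsLowerSet E} where
  toFun := toE M N
  invFun := ofE M N
  left_inv := by
    rintro ⟨⟨D, hD⟩, hfib⟩
    have hDM : D ∩ M = (N : Set α) := congrArg Subtype.val hfib
    apply Subtype.ext
    apply Subtype.ext
    show ofESet M N _ = D
    ext a
    constructor
    · rintro (⟨y, hy, hay⟩ | ⟨x, hx, hxa⟩)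
      · exact hD hay (hDM ▸ hy : y ∈ D ∩ M).1
      · exact hxa ▸ hx
    · intro haD
      by_cases hal : a ∈ (lowerClosure (N : Set α) : Set α)
      · exact Or.inl hal
      · have haC : a ∈ Comp M N := by
          intro h
          rcases h with ⟨m, hm, hma⟩ | h
          · exact hm.2 (hDM ▸ (⟨hD hma haD, hm.1⟩ : m ∈ D ∩ M))
          · exact hal h
        exact Or.inr ⟨⟨a, haC⟩, haD, rfl⟩
  right_inv := by
    rintro ⟨E, hE⟩
    apply Subtype.ext
    show {x : ↥(Comp M N) | (x : α) ∈ ofESet M N ⟨E, hE⟩} = E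
    ext x
    constructor
    · rintro (hx | ⟨y, hy, hxy⟩)
      · exact absurd (Or.inr hx) x.2
      · rwa [Subtype.val_injective hxy] at hy
    · intro hx
      exact Or.inr ⟨x, hx, rfl⟩

private lemma nat_card_sigma {ι : Type*} [Fintype ι] (f : ι → Type*) [∀ i, Finite (f i)] :
    Nat.card (Sigma f) = ∑ i, Nat.card (f i) := by
  letI : ∀ i, Fintype (f i) := fun i => Fintype.ofFinite _
  simp [Nat.card_eq_fintype_card, Fintype.card_sigma]

end Aux

theorem stmt3 {α : Type*} [Fintype α] [PartialOrder α] (M : Set α) :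
    Nat.card {D : Set α // IsLowerSet D} =
      ∑ᶠ N : {N : Set α // N ⊆ M ∧ ∀ x ∈ M, ∀ y ∈ N, x ≤ y → x ∈ N},
        Nat.card {E : Set
          (↥(((upperClosure (M \ (N : Set α)) : Set α) ∪
              (lowerClosure (N : Set α) : Set α))ᶜ)) // IsLowerSet E} := by
  classical
  letI : Fintype (Idx M) := Fintype.ofFinite _
  rw [← Nat.card_eq_of_bijective _ (Equiv.sigmaFiberEquiv (fib M)).bijective]
  rw [nat_card_sigma]
  rw [finsum_eq_sum_of_fintype]
  apply Finset.sum_congr rfl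
  intro N _
  exact Nat.card_eq_of_bijective _ (fiberEquiv M N).bijective
end

section
/- Let Q be a finite poset with carrier Y, let P = C_2 × Q where C_2 = {0,1} is the two-element chain, let M_0 = {0} × Y and M_1 = {1} × Y, and let β : M_0 → M_1 send (0,y) to (1,y). Then for every down-set N of P|_{M_0}, the induced subposet P − (↑_P(M_0 \ N) ∪ ↓_P N) equals the induced subposet of P on β[N]. -/
/-! Writing `N = {0} × S` with `S` a down-set of `Q`, the up-closure of `M₀ \ N` is `C₂ × (Q \ S)`
and the down-closure of `N` is `N` itself, so what remains is `{1} × S = β[N]`. -/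

open Set

section BottomLayer

variable {α β : Type*} [PartialOrder α] [OrderBot α] [Preorder β]

theorem compl_upperClosure_union_lowerClosure_bot_prod {S : Set β} (hS : IsLowerSet S) :
    ((upperClosure (({⊥} : Set α) ×ˢ Sᶜ) : Set (α × β)) ∪
        lowerClosure (({⊥} : Set α) ×ˢ S))ᶜ = ({⊥}ᶜ : Set α) ×ˢ S := by
  simp only [upperClosure_prod, lowerClosure_prod, UpperSet.coe_prod, LowerSet.coe_prod,
    upperClosure_singleton, lowerClosure_singleton, UpperSet.coe_Ici, LowerSet.coe_Iic,
    Ici_bot, Iic_bot, hS.compl.upperClosure, hS.lowerClosure]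
  ext ⟨a, y⟩
  by_cases ha : a = ⊥ <;> by_cases hy : y ∈ S <;> simp [ha, hy]

end BottomLayer

theorem eq_singleton_prod_of_subset_fst {α β : Type*} {N : Set (α × β)} {a : α}
    (hN : N ⊆ {p | p.1 = a}) : N = {a} ×ˢ (Prod.mk a ⁻¹' N) := by
  ext ⟨b, y⟩
  constructor
  · intro h
    obtain rfl : b = a := hN h
    exact ⟨rfl, h⟩
  · rintro ⟨rfl, h⟩
    exact h

theorem stmt7_general {β : Type*} [PartialOrder β]
    (M₀ : Set (Fin 2 × β)) (hM₀ : M₀ = {p : Fin 2 × β | p.1 = 0})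
    (N : Set (Fin 2 × β)) (hNM : N ⊆ M₀)
    (hN : ∀ x ∈ M₀, ∀ y ∈ N, x ≤ y → x ∈ N) :
    ((upperClosure (M₀ \ N) : Set (Fin 2 × β)) ∪ (lowerClosure N : Set (Fin 2 × β)))ᶜ =
      (fun p : Fin 2 × β => ((1 : Fin 2), p.2)) '' N := by
  subst hM₀
  set S : Set β := Prod.mk 0 ⁻¹' N
  have hNS : N = {0} ×ˢ S := eq_singleton_prod_of_subset_fst hNM
  have hS : IsLowerSet S := fun y z hzy hy => hN (0, z) rfl (0, y) hy ⟨le_rfl, hzy⟩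
  have hdiff : {p : Fin 2 × β | p.1 = 0} \ N = {0} ×ˢ Sᶜ := by
    rw [hNS]; ext ⟨a, y⟩; simp +contextual
  have hcompl : ({0}ᶜ : Set (Fin 2)) = {1} := by ext a; fin_cases a <;> simp
  rw [hdiff, hNS, ← bot_eq_zero, compl_upperClosure_union_lowerClosure_bot_prod hS,
    bot_eq_zero, hcompl]
  ext ⟨a, y⟩
  simp [and_comm, eq_comm]

theorem stmt7 {β : Type*} [Fintype β] [PartialOrder β]
    (M₀ : Set (Fin 2 × β)) (hM₀ : M₀ = {p : Fin 2 × β | p.1 = 0})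
    (N : Set (Fin 2 × β)) (hNM : N ⊆ M₀)
    (hN : ∀ x ∈ M₀, ∀ y ∈ N, x ≤ y → x ∈ N) :
    ((upperClosure (M₀ \ N) : Set (Fin 2 × β)) ∪ (lowerClosure N : Set (Fin 2 × β)))ᶜ =
      (fun p : Fin 2 × β => ((1 : Fin 2), p.2)) '' N :=
  stmt7_general M₀ hM₀ N hNM hN
end

section
/- For every n ≥ 3, the number of down-sets of the Boolean lattice B(n) satisfies b(n) = 2 + n + Σ_{k=2}^{n} C(n,k) · b_-(k), where b_-(k) is the number of down-sets of the subposet of B(k) obtained by removing the bottom element and all atoms. -/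
/-- `b(n)`: number of down-sets of the Boolean lattice `B(n)` (subsets of an `n`-set
ordered by inclusion). -/
noncomputable def b (n : ℕ) : ℕ := Nat.card {D : Set (Finset (Fin n)) // IsLowerSet D}

/-- `b₋(k)`: number of down-sets of `B(k)` with bottom element and atoms removed. -/
noncomputable def bMinus (k : ℕ) : ℕ :=
  Nat.card {D : Set {s : Finset (Fin k) // 2 ≤ s.card} // IsLowerSet D}

lemma card_lower_congr {P Q : Type*} [Preorder P] [Preorder Q] (e : P ≃o Q) :
    Nat.card {D : Set P // IsLowerSet D} = Nat.card {D : Set Q // IsLowerSet D} := by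
  apply Nat.card_congr
  refine ⟨fun D => ⟨e.symm ⁻¹' D.1, fun a b hba ha => D.2 (e.symm.monotone hba) ha⟩,
    fun D => ⟨e ⁻¹' D.1, fun a b hba ha => D.2 (e.monotone hba) ha⟩, fun D => ?_, fun D => ?_⟩
  · exact Subtype.ext (by ext x; simp)
  · exact Subtype.ext (by ext x; simp)

noncomputable def suppIso {n : ℕ} (A : Finset (Fin n)) :
    {s : Finset (Fin A.card) // 2 ≤ s.card} ≃o {s : Finset (Fin n) // s ⊆ A ∧ 2 ≤ s.card} := by
  set f := A.orderEmbOfFin rfl with hf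
  have key : ∀ s : Finset (Fin n), s ⊆ A →
      (Finset.univ.filter (fun i => f i ∈ s)).map f.toEmbedding = s := by
    intro s hs
    ext x
    simp only [Finset.mem_map, Finset.mem_filter, Finset.mem_univ, true_and]
    constructor
    · rintro ⟨i, hi, rfl⟩; exact hi
    · intro hx
      have : x ∈ Set.range ⇑f := by
        rw [hf, Finset.range_orderEmbOfFin]; exact hs hx
      obtain ⟨i, rfl⟩ := this
      exact ⟨i, hx, rfl⟩
  refine RelIso.mk (Equiv.mk
    (fun t => ⟨t.1.map f.toEmbedding, fun x hx => ?_, by rw [Finset.card_map]; exact t.2⟩)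
    (fun s => ⟨Finset.univ.filter (fun i => f i ∈ s.1), ?_⟩) (fun t => ?_) (fun s => ?_)) ?_
  · simp only [Finset.mem_map] at hx
    obtain ⟨i, _, rfl⟩ := hx
    exact Finset.orderEmbOfFin_mem A rfl i
  · have hc : (Finset.univ.filter (fun i => f i ∈ s.1)).card = s.1.card := by
      conv_rhs => rw [← key s.1 s.2.1]
      rw [Finset.card_map]
    rw [hc]; exact s.2.2
  · apply Subtype.ext
    ext i
    simp [Finset.mem_map']
  · exact Subtype.ext (key s.1 s.2.1)
  · intro t t'
    constructor
    · intro h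
      exact fun x hx => (Finset.mem_map' f.toEmbedding).mp (h ((Finset.mem_map' _).mpr hx))
    · intro h
      exact Finset.map_subset_map.mpr h

lemma card_lower_PA {n : ℕ} (A : Finset (Fin n)) :
    Nat.card {D : Set {s : Finset (Fin n) // s ⊆ A ∧ 2 ≤ s.card} // IsLowerSet D}
      = bMinus A.card :=
  (card_lower_congr (suppIso A)).symm

lemma some_sigma_eq {n : ℕ} {A1 A2 : Finset (Fin n)} (h : A1 = A2)
    (E1 : {D : Set {s : Finset (Fin n) // s ⊆ A1 ∧ 2 ≤ s.card} // IsLowerSet D})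
    (E2 : {D : Set {s : Finset (Fin n) // s ⊆ A2 ∧ 2 ≤ s.card} // IsLowerSet D})
    (hmem : ∀ s : Finset (Fin n), ∀ h1 : s ⊆ A1, ∀ h1' : s ⊆ A2, ∀ h2 : 2 ≤ s.card,
      ((⟨s, h1, h2⟩ : {s : Finset (Fin n) // s ⊆ A1 ∧ 2 ≤ s.card}) ∈ E1.1 ↔
        (⟨s, h1', h2⟩ : {s : Finset (Fin n) // s ⊆ A2 ∧ 2 ≤ s.card}) ∈ E2.1)) :
    (⟨A1, E1⟩ : Σ A : Finset (Fin n),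
        {D : Set {s : Finset (Fin n) // s ⊆ A ∧ 2 ≤ s.card} // IsLowerSet D}) = ⟨A2, E2⟩ := by
  subst h
  refine congrArg _ (Subtype.ext (Set.ext fun t => ?_))
  have := hmem t.1 t.2.1 t.2.1 t.2.2
  simpa using this

open Classical in
noncomputable def mainEquiv (n : ℕ) :
    {D : Set (Finset (Fin n)) // IsLowerSet D} ≃
      Option (Σ A : Finset (Fin n),
        {D' : Set {s : Finset (Fin n) // s ⊆ A ∧ 2 ≤ s.card} // IsLowerSet D'}) where
  toFun D :=
    if h : D.1 = ∅ then none else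
      some ⟨Finset.univ.filter (fun i => ({i} : Finset (Fin n)) ∈ D.1),
        ⟨{t | t.1 ∈ D.1}, fun a b hba ha => D.2 (Subtype.coe_le_coe.mpr hba) ha⟩⟩
  invFun o :=
    match o with
    | none => ⟨∅, isLowerSet_empty⟩
    | some ⟨A, D'⟩ =>
      ⟨{s : Finset (Fin n) | ∃ h : s ⊆ A, ∀ h2 : 2 ≤ s.card, (⟨s, h, h2⟩ : _) ∈ D'.1},
        by
          rintro a c hca ⟨ha, hcond⟩
          refine ⟨le_trans hca ha, fun h2 => ?_⟩
          have h2a : 2 ≤ a.card := le_trans h2 (Finset.card_le_card hca)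
          exact D'.2 (show (⟨c, le_trans hca ha, h2⟩ :
              {s : Finset (Fin n) // s ⊆ A ∧ 2 ≤ s.card}) ≤ ⟨a, ha, h2a⟩ from hca) (hcond h2a)⟩
  left_inv D := by
    by_cases h : D.1 = ∅
    · simp only [dif_pos h]
      exact Subtype.ext h.symm
    · simp only [dif_neg h]
      have hne : D.1.Nonempty := Set.nonempty_iff_ne_empty.mpr h
      have hmem : ∀ s ∈ D.1, ∀ i ∈ s, ({i} : Finset (Fin n)) ∈ D.1 := by
        intro s hs i hi
        exact D.2 (Finset.singleton_subset_iff.mpr hi) hs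
      have hempty : (∅ : Finset (Fin n)) ∈ D.1 := by
        obtain ⟨s, hs⟩ := hne
        exact D.2 (Finset.empty_subset s) hs
      apply Subtype.ext
      ext s
      simp only [Set.mem_setOf_eq, Finset.subset_iff, Finset.mem_filter, Finset.mem_univ, true_and]
      constructor
      · rintro ⟨hsub, hcond⟩
        by_cases h2 : 2 ≤ s.card
        · exact hcond h2
        · push_neg at h2
          interval_cases hc : s.card
          · rw [Finset.card_eq_zero.mp hc]; exact hempty
          · obtain ⟨i, rfl⟩ := Finset.card_eq_one.mp hc
            exact hsub (Finset.mem_singleton_self i)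
      · intro hs
        exact ⟨fun i hi => hmem s hs i hi, fun _ => hs⟩
  right_inv o := by
    match o with
    | none =>
      simp
    | some ⟨A, D'⟩ =>
      simp only []
      have hGne : ({s : Finset (Fin n) | ∃ h : s ⊆ A, ∀ h2 : 2 ≤ s.card,
          (⟨s, h, h2⟩ : _) ∈ D'.1} : Set (Finset (Fin n))) ≠ ∅ := by
        apply Set.nonempty_iff_ne_empty.mp
        exact ⟨∅, Finset.empty_subset A, fun h2 => by simp at h2⟩
      rw [dif_neg hGne]
      refine congrArg some (some_sigma_eq ?_ _ D' ?_)
      · ext i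
        simp only [Finset.mem_filter, Finset.mem_univ, true_and, Set.mem_setOf_eq]
        constructor
        · rintro ⟨hsub, -⟩
          exact hsub (Finset.mem_singleton_self i)
        · intro hi
          exact ⟨Finset.singleton_subset_iff.mpr hi, fun h2 => by simp at h2⟩
      · intro s h1 h1' h2
        constructor
        · rintro ⟨h, hc⟩
          exact hc h2
        · intro hs
          exact ⟨h1', fun _ => hs⟩

lemma bMinus_of_le_one {k : ℕ} (hk : k ≤ 1) : bMinus k = 1 := by
  have hE : IsEmpty {s : Finset (Fin k) // 2 ≤ s.card} := by
    constructor
    rintro ⟨s, hs⟩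
    have h1 : s.card ≤ k := by simpa using Finset.card_le_univ s
    omega
  have h2 : Subsingleton (Set {s : Finset (Fin k) // 2 ≤ s.card}) :=
    ⟨fun a b => Set.ext fun x => (hE.false x).elim⟩
  have h3 : Subsingleton {D : Set {s : Finset (Fin k) // 2 ≤ s.card} // IsLowerSet D} :=
    ⟨fun a b => Subtype.ext (h2.allEq a.1 b.1)⟩
  have hne : Nonempty {D : Set {s : Finset (Fin k) // 2 ≤ s.card} // IsLowerSet D} :=
    ⟨⟨∅, isLowerSet_empty⟩⟩
  exact Nat.card_unique

lemma b_eq (n : ℕ) : b n = 1 + ∑ A : Finset (Fin n), bMinus A.card := by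
  classical
  have h1 : b n = Nat.card (Option (Σ A : Finset (Fin n),
      {D' : Set {s : Finset (Fin n) // s ⊆ A ∧ 2 ≤ s.card} // IsLowerSet D'})) :=
    Nat.card_congr (mainEquiv n)
  rw [h1]
  letI : ∀ A : Finset (Fin n),
      Fintype {D' : Set {s : Finset (Fin n) // s ⊆ A ∧ 2 ≤ s.card} // IsLowerSet D'} :=
    fun A => Fintype.ofFinite _
  rw [Nat.card_eq_fintype_card, Fintype.card_option, Fintype.card_sigma, add_comm]
  congr 1
  apply Finset.sum_congr rfl
  intro A _
  rw [← Nat.card_eq_fintype_card, card_lower_PA]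

lemma group_sum (n : ℕ) (f : ℕ → ℕ) :
    ∑ A : Finset (Fin n), f A.card = ∑ k ∈ Finset.range (n + 1), n.choose k * f k := by
  rw [← Finset.powerset_univ, Finset.sum_powerset, Finset.card_univ, Fintype.card_fin]
  apply Finset.sum_congr rfl
  intro k _
  rw [Finset.sum_congr rfl (fun t ht => by rw [(Finset.mem_powersetCard.mp ht).2])]
  rw [Finset.sum_const, Finset.card_powersetCard, Finset.card_univ, Fintype.card_fin, smul_eq_mul]

theorem stmt9 (n : ℕ) (hn : 3 ≤ n) :
    b n = 2 + n + ∑ k ∈ Finset.Icc 2 n, n.choose k * bMinus k := by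
  rw [b_eq, group_sum]
  have hsplit : ∑ k ∈ Finset.range (n + 1), n.choose k * bMinus k
      = n.choose 0 * bMinus 0 + n.choose 1 * bMinus 1
        + ∑ k ∈ Finset.Icc 2 n, n.choose k * bMinus k := by
    rw [Finset.range_eq_Ico,
      ← Finset.sum_Ico_consecutive (fun k => n.choose k * bMinus k)
        (by omega : 0 ≤ 2) (by omega : 2 ≤ n + 1)]
    have e1 : ∑ k ∈ Finset.Ico 0 2, n.choose k * bMinus k
        = n.choose 0 * bMinus 0 + n.choose 1 * bMinus 1 := by
      rw [show Finset.Ico 0 2 = Finset.range 2 by rw [Finset.range_eq_Ico]]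
      rw [Finset.sum_range_succ, Finset.sum_range_one]
    have e2 : Finset.Ico 2 (n + 1) = Finset.Icc 2 n := Finset.Ico_add_one_right_eq_Icc 2 n
    rw [e1, e2]
  rw [hsplit, bMinus_of_le_one (by norm_num), bMinus_of_le_one (le_refl 1),
    Nat.choose_zero_right, Nat.choose_one_right]
  generalize (∑ k ∈ Finset.Icc 2 n, n.choose k * bMinus k) = S
  omega
end

section
/- b_-(2) = 2, and for all k ≥ 3, b_-(k) = b_-^-(k) + 2 + Σ_{i=2}^{k-1} C(k,i) · b_-(i), where b_-^-(k) is the number of down-sets of the Boolean lattice B(k) with both extrema, all atoms, and all co-atoms removed. -/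
open Finset

noncomputable section
namespace Stmt10

/-- lower sets as a subtype -/
abbrev DS (X : Type*) [Preorder X] := {D : Set X // IsLowerSet D}

def dsCongr {X Y : Type*} [Preorder X] [Preorder Y] (e : X ≃o Y) : DS X ≃ DS Y where
  toFun D := ⟨e.symm ⁻¹' D.1, D.2.preimage e.symm.monotone⟩
  invFun D := ⟨e ⁻¹' D.1, D.2.preimage e.monotone⟩
  left_inv D := by ext x; simp
  right_inv D := by ext x; simp

lemma card_DS_of_isEmpty (X : Type*) [Preorder X] [IsEmpty X] : Nat.card (DS X) = 1 := by
  have : Subsingleton (DS X) := ⟨fun D E => Subtype.ext (by ext x; exact isEmptyElim x)⟩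
  have : Nonempty (DS X) := ⟨⟨∅, isLowerSet_empty⟩⟩
  exact Nat.card_unique

def subtypeOrderIso {α : Type*} [Preorder α] {p q : α → Prop} (h : ∀ a, p a ↔ q a) :
    {a // p a} ≃o {a // q a} :=
  { Equiv.subtypeEquivRight h with map_rel_iff' := Iff.rfl }

lemma card_sigma' {ι : Type*} [Fintype ι] (f : ι → Type*) [∀ i, Finite (f i)] :
    Nat.card (Σ i, f i) = ∑ i, Nat.card (f i) := by
  letI : ∀ i, Fintype (f i) := fun i => Fintype.ofFinite _
  simp [Nat.card_eq_fintype_card]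

lemma card_fiberwise {α β : Type*} [Finite α] [Fintype β] (f : α → β) :
    Nat.card α = ∑ y, Nat.card {x // f x = y} := by
  rw [← Nat.card_congr (Equiv.sigmaFiberEquiv f), card_sigma']

end Stmt10

namespace Stmt10

open Classical in
/-- Transport of finsets along an embedding with range `B`. -/
def mapOrderIso {α β : Type*} [Fintype α] [DecidableEq β] (f : α ↪ β) (p : ℕ → Prop)
    (B : Finset β) (hrange : ∀ b, b ∈ B ↔ ∃ a, f a = b) :
    {s : Finset α // p s.card} ≃o {t : Finset β // t ⊆ B ∧ p t.card} where
  toEquiv := Equiv.ofBijective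
    (fun s => ⟨s.1.map f, fun b hb => by
        rw [Finset.mem_map] at hb
        obtain ⟨a, _, rfl⟩ := hb
        exact (hrange _).2 ⟨a, rfl⟩,
      by rw [Finset.card_map]; exact s.2⟩)
    (by
      constructor
      · intro s t hst
        exact Subtype.ext (Finset.map_injective f (congrArg Subtype.val hst))
      · rintro ⟨T, hTB, hTp⟩
        refine ⟨⟨Finset.univ.filter (fun a => f a ∈ T), ?_⟩, ?_⟩
        · have hmap : (Finset.univ.filter (fun a => f a ∈ T)).map f = T := by
            ext b
            simp only [Finset.mem_map, Finset.mem_filter, Finset.mem_univ, true_and]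
            constructor
            · rintro ⟨a, ha, rfl⟩; exact ha
            · intro hb
              obtain ⟨a, rfl⟩ := (hrange b).1 (hTB hb)
              exact ⟨a, hb, rfl⟩
          rw [← Finset.card_map, hmap]; exact hTp
        · apply Subtype.ext
          ext b
          simp only [Finset.mem_map, Finset.mem_filter, Finset.mem_univ, true_and]
          constructor
          · rintro ⟨a, ha, rfl⟩; exact ha
          · intro hb
            obtain ⟨a, rfl⟩ := (hrange b).1 (hTB hb)
            exact ⟨a, hb, rfl⟩)
  map_rel_iff' := by
    intro s t
    exact ⟨fun h => (Finset.map_subset_map).1 h, fun h => Finset.map_subset_map.2 h⟩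

end Stmt10

/-- `b₋⁻(k)`: number of down-sets of `B(k)` with both extrema, atoms and co-atoms removed. -/
noncomputable def bMinusMinus (k : ℕ) : ℕ :=
  Nat.card {D : Set {s : Finset (Fin k) // 2 ≤ s.card ∧ s.card ≤ k - 2} // IsLowerSet D}

namespace Stmt10

def Wcard (i m : ℕ) : ℕ := Nat.card (DS {s : Finset (Fin i) // 2 ≤ s.card ∧ s.card ≤ m})

lemma card_fin_le (i : ℕ) (s : Finset (Fin i)) : s.card ≤ i := by
  simpa using Finset.card_le_univ s

lemma Wcard_of_le {i m : ℕ} (h : i ≤ m) : Wcard i m = bMinus i := by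
  exact Nat.card_congr (dsCongr (subtypeOrderIso
    (fun s => ⟨fun hs => hs.1, fun hs => ⟨hs, le_trans (card_fin_le i s) h⟩⟩)))

lemma Wcard_of_small {i m : ℕ} (h : i ≤ 1) : Wcard i m = 1 := by
  have : IsEmpty {s : Finset (Fin i) // 2 ≤ s.card ∧ s.card ≤ m} := by
    constructor
    rintro ⟨s, hs, -⟩
    exact absurd (le_trans hs (card_fin_le i s)) (by omega)
  exact card_DS_of_isEmpty _

lemma bMinus_split {i : ℕ} (h : 2 ≤ i) : bMinus i = Wcard i (i - 1) + 1 := by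
  classical
  set X := {s : Finset (Fin i) // 2 ≤ s.card} with hX
  have htopc : 2 ≤ (Finset.univ : Finset (Fin i)).card := by simpa using h
  set top : X := ⟨Finset.univ, htopc⟩ with htop
  have hb : bMinus i = Nat.card (DS X) := rfl
  have e0 : DS X ≃ ({D : DS X // top ∈ D.1} ⊕ {D : DS X // top ∉ D.1}) :=
    (Equiv.sumCompl (fun D : DS X => top ∈ D.1)).symm
  rw [hb, Nat.card_congr e0, Nat.card_sum]
  have c1 : Nat.card {D : DS X // top ∈ D.1} = 1 := by
    have key : ∀ D : {D : DS X // top ∈ D.1}, D.1.1 = Set.univ := by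
      rintro ⟨D, htopD⟩
      ext x
      simp only [Set.mem_univ, iff_true]
      exact D.2 (show x ≤ top from Finset.subset_univ x.1) htopD
    have : Subsingleton {D : DS X // top ∈ D.1} :=
      ⟨fun D E => Subtype.ext (Subtype.ext ((key D).trans (key E).symm))⟩
    have : Nonempty {D : DS X // top ∈ D.1} :=
      ⟨⟨⟨Set.univ, isLowerSet_univ⟩, Set.mem_univ _⟩⟩
    exact Nat.card_unique
  have c2 : Nat.card {D : DS X // top ∉ D.1} = Wcard i (i - 1) := by
    set Y := {s : Finset (Fin i) // 2 ≤ s.card ∧ s.card ≤ i - 1} with hY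
    have cardlt : ∀ s : X, top ∉ ({s} : Set X) → True := fun _ _ => trivial
    refine Nat.card_congr ?_
    refine ⟨fun D => ⟨{s : Y | (⟨s.1, s.2.1⟩ : X) ∈ D.1.1}, ?_⟩,
           fun E => ⟨⟨{s : X | ∃ hc : s.1.card ≤ i - 1, (⟨s.1, s.2, hc⟩ : Y) ∈ E.1}, ?_⟩, ?_⟩,
           ?_, ?_⟩
    · intro a b hba ha
      exact D.1.2 (show (⟨b.1, b.2.1⟩ : X) ≤ ⟨a.1, a.2.1⟩ from hba) ha
    · rintro a b hba ⟨hc, ha⟩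
      have hbc : b.1.card ≤ i - 1 := le_trans (Finset.card_le_card hba) hc
      exact ⟨hbc, E.2 (show (⟨b.1, b.2, hbc⟩ : Y) ≤ ⟨a.1, a.2, hc⟩ from hba) ha⟩
    · rintro ⟨hc, -⟩
      simp only [htop] at hc
      have : (Finset.univ : Finset (Fin i)).card = i := by simp
      omega
    · rintro ⟨D, htopD⟩
      apply Subtype.ext
      apply Subtype.ext
      ext s
      simp only [Set.mem_setOf_eq]
      constructor
      · rintro ⟨hc, hs⟩
        exact hs
      · intro hs
        have hc : s.1.card ≤ i - 1 := by
          by_contra hcc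
          have h1 : s.1.card ≤ i := card_fin_le i s.1
          have h2 : s.1.card = i := by omega
          have : s.1 = Finset.univ := Finset.eq_univ_of_card _ (by simpa using h2)
          have : s = top := Subtype.ext (by simpa using this)
          exact htopD (this ▸ hs)
        exact ⟨hc, hs⟩
    · intro E
      apply Subtype.ext
      ext s
      simp only [Set.mem_setOf_eq]
      constructor
      · rintro ⟨hc, hs⟩
        convert hs using 2
      · intro hs
        exact ⟨s.2.2, hs⟩
  rw [c1, c2, Nat.add_comm]


variable {k : ℕ}

abbrev XX (k : ℕ) : Type := {s : Finset (Fin k) // 2 ≤ s.card}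

lemma card_compl' (s : Finset (Fin k)) : sᶜ.card = k - s.card := by
  simp [Finset.card_compl]

def topX (hk : 3 ≤ k) : XX k := ⟨Finset.univ, by simp; omega⟩

def coatomX (hk : 3 ≤ k) (x : Fin k) : XX k :=
  ⟨{x}ᶜ, by rw [card_compl']; simp; omega⟩

lemma subset_compl_singleton {A : Finset (Fin k)} {x : Fin k} :
    A ⊆ {x}ᶜ ↔ x ∉ A := by
  constructor
  · intro h hx
    simpa using h hx
  · intro hx y hy
    simp only [Finset.mem_compl, Finset.mem_singleton]
    rintro rfl
    exact hx hy

abbrev FT (k : ℕ) (A : Finset (Fin k)) : Type :=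
  {T : Finset (Fin k) // T ⊆ Aᶜ ∧ (2 ≤ T.card ∧ T.card ≤ k - 2)}

open Classical in
noncomputable def cls (hk : 3 ≤ k) (D : DS (XX k)) : Option (Finset (Fin k)) :=
  if topX hk ∈ D.1 then none
  else some (Finset.univ.filter fun x => coatomX hk x ∈ D.1)

lemma card_fiber_none (hk : 3 ≤ k) :
    Nat.card {D : DS (XX k) // cls hk D = none} = 1 := by
  classical
  have hmem : ∀ D : DS (XX k), cls hk D = none ↔ topX hk ∈ D.1 := by
    intro D
    unfold cls
    split_ifs with h
    · simp [h]
    · simp [h]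
  have key : ∀ D : {D : DS (XX k) // cls hk D = none}, D.1.1 = Set.univ := by
    rintro ⟨D, hD⟩
    rw [hmem] at hD
    ext x
    simp only [Set.mem_univ, iff_true]
    exact D.2 (show x ≤ topX hk from Finset.subset_univ x.1) hD
  have : Subsingleton {D : DS (XX k) // cls hk D = none} :=
    ⟨fun D E => Subtype.ext (Subtype.ext ((key D).trans (key E).symm))⟩
  have : Nonempty {D : DS (XX k) // cls hk D = none} :=
    ⟨⟨⟨Set.univ, isLowerSet_univ⟩, (hmem _).2 (Set.mem_univ _)⟩⟩
  exact Nat.card_unique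

end Stmt10

namespace Stmt10

lemma compl_card_ge {A : Finset (Fin k)} (T : FT k A) : 2 ≤ (T.1ᶜ).card := by
  have := T.2.2.2
  have h2 := T.2.2.1
  have hle := card_fin_le k T.1
  rw [card_compl']
  omega

def fibToFun (A : Finset (Fin k)) (D : DS (XX k)) : DS (FT k A) :=
  ⟨{T | ∀ h2 : 2 ≤ (T.1ᶜ).card, (⟨T.1ᶜ, h2⟩ : XX k) ∉ D.1}, by
    intro a b hba ha h2 hbmem
    refine ha (compl_card_ge a) ?_
    exact D.2 (show (⟨a.1ᶜ, compl_card_ge a⟩ : XX k) ≤ ⟨b.1ᶜ, h2⟩ from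
      Finset.compl_subset_compl.2 hba) hbmem⟩

def fibInvFun (A : Finset (Fin k)) (E : DS (FT k A)) : DS (XX k) :=
  ⟨{s | s.1 ≠ Finset.univ ∧ ∀ _ : A ⊆ s.1,
      ∃ hT : s.1ᶜ ⊆ Aᶜ ∧ (2 ≤ s.1ᶜ.card ∧ s.1ᶜ.card ≤ k - 2),
        (⟨s.1ᶜ, hT⟩ : FT k A) ∉ E.1}, by
    rintro a b hba ⟨hane, ha⟩
    constructor
    · intro hbu
      exact hane (Finset.eq_univ_of_card _ (by
        have : b.1 ⊆ a.1 := hba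
        have h1 := card_fin_le k a.1
        have h2 : (Finset.univ : Finset (Fin k)).card ≤ a.1.card := Finset.card_le_card (hbu ▸ hba)
        simpa using le_antisymm h1 (by simpa using h2)))
    · intro hAb
      obtain ⟨hTa, hnE⟩ := ha (hAb.trans hba)
      have hcb : b.1.card ≤ a.1.card := Finset.card_le_card hba
      have hbcompl : 2 ≤ b.1ᶜ.card ∧ b.1ᶜ.card ≤ k - 2 := by
        rw [card_compl']
        rw [card_compl'] at hTa
        have := b.2
        omega
      refine ⟨⟨?_, hbcompl⟩, ?_⟩
      · intro x hx
        simp only [Finset.mem_compl] at hx ⊢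
        exact fun hxA => hx (hAb hxA)
      · intro hbE
        refine hnE (E.2 (show (⟨a.1ᶜ, hTa⟩ : FT k A) ≤ ⟨b.1ᶜ, _⟩ from
          Finset.compl_subset_compl.2 hba) hbE)⟩

end Stmt10

namespace Stmt10

lemma mem_fibToFun_compl (A : Finset (Fin k)) (D : DS (XX k)) (s : XX k)
    (hT : s.1ᶜ ⊆ Aᶜ ∧ (2 ≤ s.1ᶜ.card ∧ s.1ᶜ.card ≤ k - 2)) :
    ((⟨s.1ᶜ, hT⟩ : FT k A) ∈ (fibToFun A D).1) ↔ s ∉ D.1 := by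
  have hcc : s.1ᶜᶜ = s.1 := compl_compl _
  have helt : ∀ h2 : 2 ≤ s.1ᶜᶜ.card, (⟨s.1ᶜᶜ, h2⟩ : XX k) = s := fun h2 => Subtype.ext hcc
  constructor
  · intro hmem
    have h2 : 2 ≤ s.1ᶜᶜ.card := by rw [hcc]; exact s.2
    have := hmem h2
    rwa [helt h2] at this
  · intro hs h2
    rw [helt h2]
    exact hs

lemma cls_fibInvFun (hk : 3 ≤ k) (A : Finset (Fin k)) (E : DS (FT k A)) :
    cls hk (fibInvFun A E) = some A := by
  classical
  have htop : topX hk ∉ (fibInvFun A E).1 := by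
    rintro ⟨hne, -⟩
    exact hne rfl
  have hco : ∀ x : Fin k, coatomX hk x ∈ (fibInvFun A E).1 ↔ x ∈ A := by
    intro x
    constructor
    · rintro ⟨-, h⟩
      by_contra hxA
      obtain ⟨⟨-, h2, -⟩, -⟩ := h (subset_compl_singleton.2 hxA)
      have hv : ((coatomX hk x).1)ᶜ = {x} := by
        show ({x}ᶜ : Finset (Fin k))ᶜ = {x}
        exact compl_compl _
      rw [hv] at h2
      simp at h2
    · intro hxA
      refine ⟨?_, ?_⟩
      · intro hu
        have hu' : ({x}ᶜ : Finset (Fin k)) = Finset.univ := hu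
        have : ({x}ᶜ : Finset (Fin k)).card = k := by rw [hu']; simp
        rw [card_compl'] at this
        simp at this
        omega
      · intro hA
        exact absurd (subset_compl_singleton.1 hA) (not_not.2 hxA)
  unfold cls
  rw [if_neg htop]
  congr 1
  ext x
  simp only [Finset.mem_filter, Finset.mem_univ, true_and]
  exact hco x

lemma fib_left_inv (hk : 3 ≤ k) (A : Finset (Fin k)) (E : DS (FT k A)) :
    fibToFun A (fibInvFun A E) = E := by
  classical
  apply Subtype.ext
  ext T
  show (∀ h2 : 2 ≤ T.1ᶜ.card, (⟨T.1ᶜ, h2⟩ : XX k) ∉ (fibInvFun A E).1) ↔ T ∈ E.1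
  have h2T : 2 ≤ T.1ᶜ.card := compl_card_ge T
  have hTk := T.2.2
  have hTA := T.2.1
  have hccT : T.1ᶜᶜ = T.1 := compl_compl _
  have hmem : (⟨T.1ᶜ, h2T⟩ : XX k) ∈ (fibInvFun A E).1 ↔ T ∉ E.1 := by
    show (T.1ᶜ ≠ Finset.univ ∧ _) ↔ _
    have hne : T.1ᶜ ≠ Finset.univ := by
      intro hu
      have : T.1ᶜ.card = k := by rw [hu]; simp
      rw [card_compl'] at this
      have := T.2.2.1
      have := card_fin_le k T.1
      omega
    have hAT : A ⊆ T.1ᶜ := by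
      intro x hx
      simp only [Finset.mem_compl]
      intro hxT
      have := hTA hxT
      simp [hx] at this
    have hT' : T.1ᶜᶜ ⊆ Aᶜ ∧ (2 ≤ T.1ᶜᶜ.card ∧ T.1ᶜᶜ.card ≤ k - 2) := by
      rw [hccT]; exact T.2
    constructor
    · rintro ⟨-, h⟩
      obtain ⟨hT'', hnE⟩ := h hAT
      intro hTE
      refine hnE ?_
      have : (⟨T.1ᶜᶜ, hT''⟩ : FT k A) = T := Subtype.ext hccT
      rwa [this]
    · intro hTnE
      refine ⟨hne, fun _ => ⟨hT', ?_⟩⟩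
      have : (⟨T.1ᶜᶜ, hT'⟩ : FT k A) = T := Subtype.ext hccT
      rw [this]
      exact hTnE
  constructor
  · intro h
    by_contra hTnE
    exact (h h2T) (hmem.2 hTnE)
  · intro hTE h2
    intro hmem'
    have : (⟨T.1ᶜ, h2⟩ : XX k) = ⟨T.1ᶜ, h2T⟩ := rfl
    rw [this] at hmem'
    exact (hmem.1 hmem') hTE

end Stmt10

namespace Stmt10

lemma fib_right_inv (hk : 3 ≤ k) (A : Finset (Fin k)) (D : DS (XX k))
    (hD : cls hk D = some A) :
    fibInvFun A (fibToFun A D) = D := by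
  classical
  have hsplit : topX hk ∉ D.1 ∧ (Finset.univ.filter fun x => coatomX hk x ∈ D.1) = A := by
    unfold cls at hD
    by_cases h : topX hk ∈ D.1
    · rw [if_pos h] at hD
      exact absurd hD (by simp)
    · rw [if_neg h] at hD
      exact ⟨h, by injection hD⟩
  obtain ⟨htop, hfil⟩ := hsplit
  have hco : ∀ x : Fin k, coatomX hk x ∈ D.1 ↔ x ∈ A := by
    intro x
    rw [← hfil]
    simp
  apply Subtype.ext
  ext s
  show (s.1 ≠ Finset.univ ∧ ∀ _ : A ⊆ s.1, ∃ hT : _, (⟨s.1ᶜ, hT⟩ : FT k A) ∉ (fibToFun A D).1)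
      ↔ s ∈ D.1
  constructor
  · rintro ⟨hne, h⟩
    by_cases hA : A ⊆ s.1
    · obtain ⟨hT, hnmem⟩ := h hA
      by_contra hsD
      exact hnmem ((mem_fibToFun_compl A D s hT).2 hsD)
    · obtain ⟨x, hxA, hxs⟩ := Finset.not_subset.1 hA
      have hsle : s ≤ coatomX hk x := subset_compl_singleton.2 hxs
      exact D.2 hsle ((hco x).2 hxA)
  · intro hsD
    have hne : s.1 ≠ Finset.univ := by
      intro hu
      exact htop (show topX hk ∈ D.1 from by
        have : s = topX hk := Subtype.ext hu
        rwa [this] at hsD)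
    refine ⟨hne, fun hA => ?_⟩
    have hcard : s.1.card ≤ k - 2 := by
      by_contra hc
      have h1 := card_fin_le k s.1
      have h2 : s.1.card ≠ k := fun h => hne (Finset.eq_univ_of_card _ (by simpa using h))
      have h3 : s.1.card = k - 1 := by omega
      have h4 : s.1ᶜ.card = 1 := by rw [card_compl']; omega
      obtain ⟨x, hx⟩ := Finset.card_eq_one.1 h4
      have hs1 : s.1 = {x}ᶜ := by rw [← hx, compl_compl]
      have hs : s = coatomX hk x := Subtype.ext hs1
      have hxA : x ∈ A := (hco x).1 (hs ▸ hsD)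
      have : x ∉ s.1 := by rw [hs1]; exact fun hmem => by simpa using hmem
      exact this (hA hxA)
    have hT : s.1ᶜ ⊆ Aᶜ ∧ (2 ≤ s.1ᶜ.card ∧ s.1ᶜ.card ≤ k - 2) := by
      refine ⟨?_, ?_, ?_⟩
      · intro x hx
        simp only [Finset.mem_compl] at hx ⊢
        exact fun hxA => hx (hA hxA)
      · rw [card_compl']
        have := card_fin_le k s.1
        omega
      · rw [card_compl']
        have := s.2
        omega
    exact ⟨hT, fun hmem => ((mem_fibToFun_compl A D s hT).1 hmem) hsD⟩

lemma card_fiber_some (hk : 3 ≤ k) (A : Finset (Fin k)) :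
    Nat.card {D : DS (XX k) // cls hk D = some A} = Nat.card (DS (FT k A)) := by
  refine Nat.card_congr ⟨fun D => fibToFun A D.1, fun E => ⟨fibInvFun A E, cls_fibInvFun hk A E⟩,
    ?_, ?_⟩
  · rintro ⟨D, hD⟩
    exact Subtype.ext (fib_right_inv hk A D hD)
  · intro E
    exact fib_left_inv hk A E

end Stmt10

namespace Stmt10

lemma card_FT (A : Finset (Fin k)) :
    Nat.card (DS (FT k A)) = Wcard (k - A.card) (k - 2) := by
  classical
  have hc : (Aᶜ : Finset (Fin k)).card = k - A.card := card_compl' A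
  let e' : Fin (k - A.card) ≃ {x : Fin k // x ∈ (Aᶜ : Finset (Fin k))} :=
    ((Aᶜ : Finset (Fin k)).equivFin.trans (finCongr hc)).symm
  let f : Fin (k - A.card) ↪ Fin k :=
    ⟨fun j => (e' j : Fin k), Subtype.coe_injective.comp e'.injective⟩
  have hrange : ∀ b : Fin k, b ∈ (Aᶜ : Finset (Fin k)) ↔ ∃ a, f a = b := by
    intro b
    constructor
    · intro hb
      exact ⟨e'.symm ⟨b, hb⟩, by simp [f]⟩
    · rintro ⟨a, rfl⟩
      exact (e' a).2
  exact (Nat.card_congr (dsCongr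
    (mapOrderIso f (fun c => 2 ≤ c ∧ c ≤ k - 2) (Aᶜ) hrange))).symm

lemma master (hk : 3 ≤ k) :
    bMinus k = 1 + ∑ A : Finset (Fin k), Wcard (k - A.card) (k - 2) := by
  classical
  have h0 : bMinus k = Nat.card (DS (XX k)) := rfl
  rw [h0, card_fiberwise (cls hk)]
  rw [univ_option, Finset.sum_insertNone (fun y => Nat.card { x // cls hk x = y })]
  rw [card_fiber_none hk]
  congr 1
  apply Finset.sum_congr rfl
  intro A _
  rw [card_fiber_some hk A, card_FT A]

end Stmt10

namespace Stmt10

lemma bMinus_pos (i : ℕ) : 1 ≤ bMinus i := by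
  have : Nonempty {D : Set {s : Finset (Fin i) // 2 ≤ s.card} // IsLowerSet D} :=
    ⟨⟨∅, isLowerSet_empty⟩⟩
  exact Nat.card_pos

lemma bMinus_two : bMinus 2 = 2 := by
  classical
  have hu : Unique (XX 2) := by
    refine ⟨⟨⟨Finset.univ, by decide⟩⟩, ?_⟩
    rintro ⟨s, hs⟩
    apply Subtype.ext
    exact Finset.eq_univ_of_card _ (by
      have := card_fin_le 2 s
      simp only [Fintype.card_fin]
      omega)
  have hss : Subsingleton (XX 2) := hu.instSubsingleton
  have hall : ∀ D : Set (XX 2), IsLowerSet D := by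
    intro D a b hba ha
    rwa [Subsingleton.elim b a]
  have e1 : {D : Set (XX 2) // IsLowerSet D} ≃ Set (XX 2) := Equiv.subtypeUnivEquiv hall
  have e2 : Set (XX 2) ≃ Prop := Equiv.funUnique (XX 2) Prop
  have e3 : Prop ≃ Bool := Equiv.propEquivBool
  have : bMinus 2 = Nat.card Bool := Nat.card_congr ((e1.trans e2).trans e3)
  rw [this, Nat.card_eq_fintype_card]
  simp

lemma main_eq (hk : 3 ≤ k) :
    bMinus k = bMinusMinus k + 2 + ∑ i ∈ Finset.Icc 2 (k - 1), k.choose i * bMinus i := by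
  classical
  obtain ⟨n, rfl⟩ : ∃ n, k = n + 3 := ⟨k - 3, by omega⟩
  set k := n + 3
  rw [master hk]
  -- Step A: group by cardinality
  have hA : ∑ A : Finset (Fin k), Wcard (k - A.card) (k - 2)
      = ∑ m ∈ Finset.range (k + 1), k.choose m * Wcard (k - m) (k - 2) := by
    rw [← Finset.powerset_univ]
    rw [Finset.sum_powerset_apply_card (fun m => Wcard (k - m) (k - 2))
      (x := (Finset.univ : Finset (Fin k)))]
    simp [Finset.card_univ]
  rw [hA]
  -- Step B: reflect the sum
  have hB : ∑ m ∈ Finset.range (k + 1), k.choose m * Wcard (k - m) (k - 2)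
      = ∑ i ∈ Finset.range (k + 1), k.choose i * Wcard i (k - 2) := by
    rw [← Finset.sum_range_reflect (fun i => k.choose i * Wcard i (k - 2)) (k + 1)]
    apply Finset.sum_congr rfl
    intro m hm
    rw [Finset.mem_range] at hm
    have h1 : k + 1 - 1 - m = k - m := by omega
    rw [h1]
    congr 1
    exact (Nat.choose_symm (by omega)).symm
  rw [hB]
  have hsplit : ∑ i ∈ Finset.range (k + 1), k.choose i * Wcard i (k - 2)
      = k.choose 0 * Wcard 0 (k - 2) + k.choose 1 * Wcard 1 (k - 2)
        + (∑ i ∈ Finset.range n, k.choose (i + 2) * Wcard (i + 2) (k - 2))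
        + k.choose (n + 2) * Wcard (n + 2) (k - 2)
        + k.choose (n + 3) * Wcard (n + 3) (k - 2) := by
    show ∑ i ∈ Finset.range (n + 4), _ = _
    rw [Finset.sum_range_succ, Finset.sum_range_succ, Finset.sum_range_succ',
      Finset.sum_range_succ']
    have he : ∀ x : ℕ, x + 1 + 1 = x + 2 := fun x => by omega
    simp only [he]
    ring
  rw [hsplit]
  have hW0 : Wcard 0 (k - 2) = 1 := Wcard_of_small (by omega)
  have hW1 : Wcard 1 (k - 2) = 1 := Wcard_of_small (by omega)
  have hb := bMinus_pos (n + 2)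
  have hWn2 : Wcard (n + 2) (k - 2) = bMinus (n + 2) - 1 := by
    have h2 := bMinus_split (i := n + 2) (by omega)
    have h' : n + 2 - 1 = k - 2 := by omega
    rw [h'] at h2
    omega
  have hWtop : Wcard (n + 3) (k - 2) = bMinusMinus k := rfl
  have hmid : ∑ i ∈ Finset.range n, k.choose (i + 2) * Wcard (i + 2) (k - 2)
      = ∑ i ∈ Finset.range n, k.choose (i + 2) * bMinus (i + 2) := by
    apply Finset.sum_congr rfl
    intro i hi
    rw [Finset.mem_range] at hi
    rw [Wcard_of_le (by omega)]
  have hck : k.choose (n + 2) = k := by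
    have h := Nat.choose_symm (n := k) (k := n + 2) (by omega)
    rw [show k - (n + 2) = 1 from by omega] at h
    rw [← h, Nat.choose_one_right]
  have hRHS : ∑ i ∈ Finset.Icc 2 (k - 1), k.choose i * bMinus i
      = (∑ i ∈ Finset.range n, k.choose (i + 2) * bMinus (i + 2))
        + k.choose (n + 2) * bMinus (n + 2) := by
    have h1 : Finset.Icc 2 (k - 1) = Finset.Ico 2 (n + 3) := by
      rw [show k - 1 = n + 2 from by omega]
      exact (Finset.Ico_add_one_right_eq_Icc 2 (n + 2)).symm
    rw [h1, Finset.sum_Ico_eq_sum_range]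
    rw [show n + 3 - 2 = n + 1 from by omega, Finset.sum_range_succ]
    have he : ∀ x : ℕ, 2 + x = x + 2 := fun x => by omega
    simp only [he]
  rw [hW0, hW1, hWn2, hWtop, hmid, hRHS, hck, Nat.choose_zero_right, Nat.choose_one_right,
    Nat.choose_self]
  obtain ⟨c, hc⟩ : ∃ c, bMinus (n + 2) = c + 1 := ⟨bMinus (n + 2) - 1, by omega⟩
  rw [hc]
  simp only [Nat.add_sub_cancel]
  ring

end Stmt10

theorem stmt10 :
    bMinus 2 = 2 ∧
    ∀ k : ℕ, 3 ≤ k →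
      bMinus k = bMinusMinus k + 2 + ∑ i ∈ Finset.Icc 2 (k - 1), k.choose i * bMinus i :=
  ⟨Stmt10.bMinus_two, fun _ hk => Stmt10.main_eq hk⟩

end
end

section
/- Let n ≥ 2 and let N be a subset of the atom level L_1(n) of the Boolean lattice B(n) with #N = k. If k = 0 then B(n) − (↑(L_1(n)\N) ∪ ↓N) is the one-point poset {⊥}; if k = 1 it is empty; and if 2 ≤ k ≤ n it is isomorphic to B_-(k), the Boolean lattice with k atoms with its bottom element and atoms removed. -/
/-- The atom level `L₁(n)` of the Boolean lattice `B(n)`. -/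
def L1 (n : ℕ) : Set (Finset (Fin n)) := {s | s.card = 1}

/-- The carrier of `B(n) − (↑(L₁(n)\N) ∪ ↓N)`. -/
def carrier11 (n : ℕ) (N : Set (Finset (Fin n))) : Set (Finset (Fin n)) :=
  ((upperClosure (L1 n \ N) : Set (Finset (Fin n))) ∪
    (lowerClosure N : Set (Finset (Fin n))))ᶜ

theorem stmt11 (n k : ℕ) (hn : 2 ≤ n) (N : Set (Finset (Fin n)))
    (hN : N ⊆ L1 n) (hk : Nat.card N = k) :
    (k = 0 → carrier11 n N = ({∅} : Set (Finset (Fin n)))) ∧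
    (k = 1 → carrier11 n N = (∅ : Set (Finset (Fin n)))) ∧
    (2 ≤ k → k ≤ n →
      Nonempty ((↥(carrier11 n N)) ≃o {s : Finset (Fin k) // 2 ≤ s.card})) := by
  classical
  set A : Finset (Fin n) := Finset.univ.filter (fun x => ({x} : Finset (Fin n)) ∈ N) with hAdef
  have hxA : ∀ x : Fin n, x ∈ A ↔ ({x} : Finset (Fin n)) ∈ N := by
    intro x; simp [hAdef]
  have hNA : N = ↑(A.image (fun x => ({x} : Finset (Fin n)))) := by
    ext t
    simp only [Finset.coe_image, Set.mem_image, Finset.mem_coe]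
    constructor
    · intro ht
      have : t.card = 1 := hN ht
      obtain ⟨x, rfl⟩ := Finset.card_eq_one.mp this
      exact ⟨x, (hxA x).mpr ht, rfl⟩
    · rintro ⟨x, hx, rfl⟩; exact (hxA x).mp hx
  have hcard : A.card = k := by
    have h1 : Nat.card N = (A.image (fun x => ({x} : Finset (Fin n)))).card := by
      rw [hNA, Nat.card_coe_set_eq, Set.ncard_coe_finset]
    rw [Finset.card_image_of_injective _ (fun a b h => Finset.singleton_injective h)] at h1
    omega
  have hmem : ∀ s : Finset (Fin n),
      s ∈ carrier11 n N ↔ (s ⊆ A ∧ ¬ ∃ x ∈ A, s ⊆ {x}) := by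
    intro s
    simp only [carrier11, Set.mem_compl_iff, Set.mem_union, not_or, SetLike.mem_coe,
      mem_upperClosure, mem_lowerClosure]
    constructor
    · rintro ⟨h1, h2⟩
      constructor
      · intro x hx
        by_contra hxn
        exact h1 ⟨{x}, ⟨by simp [L1], fun hc => hxn ((hxA x).mpr hc)⟩,
          Finset.singleton_subset_iff.mpr hx⟩
      · rintro ⟨x, hx, hsx⟩
        exact h2 ⟨{x}, (hxA x).mp hx, hsx⟩
    · rintro ⟨h1, h2⟩
      constructor
      · rintro ⟨t, ⟨ht1, ht2⟩, hts⟩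
        obtain ⟨x, rfl⟩ := Finset.card_eq_one.mp ht1
        exact ht2 ((hxA x).mp (h1 (Finset.singleton_subset_iff.mp hts)))
      · rintro ⟨t, htN, hst⟩
        have : t.card = 1 := hN htN
        obtain ⟨x, rfl⟩ := Finset.card_eq_one.mp this
        exact h2 ⟨x, (hxA x).mpr htN, hst⟩
  refine ⟨?_, ?_, ?_⟩
  · -- k = 0
    intro hk0
    have hA0 : A = ∅ := Finset.card_eq_zero.mp (by omega)
    ext s
    rw [hmem]
    simp [hA0, Finset.subset_empty, Set.mem_singleton_iff]
  · -- k = 1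
    intro hk1
    have : ∃ a, A = {a} := Finset.card_eq_one.mp (by omega)
    obtain ⟨a, ha⟩ := this
    ext s
    rw [hmem]
    simp only [ha, Set.mem_empty_iff_false, iff_false, not_and, not_not]
    intro hs
    exact ⟨a, Finset.mem_singleton_self a, hs⟩
  · -- 2 ≤ k
    intro hk2 hkn
    have hcar : carrier11 n N = {s : Finset (Fin n) | s ⊆ A ∧ 2 ≤ s.card} := by
      ext s
      rw [hmem]
      constructor
      · rintro ⟨h1, h2⟩
        refine ⟨h1, ?_⟩
        by_contra hc
        push_neg at hc
        have hs1 : s.card ≤ 1 := by omega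
        rcases s.eq_empty_or_nonempty with rfl | ⟨y, hy⟩
        · obtain ⟨a, ha⟩ := Finset.card_pos.mp (show 0 < A.card by omega)
          exact h2 ⟨a, ha, Finset.empty_subset _⟩
        · have : s = {y} := Finset.eq_singleton_iff_unique_mem.mpr
            ⟨hy, fun z hz => Finset.card_le_one.mp hs1 z hz y hy⟩
          exact h2 ⟨y, h1 hy, this ▸ Finset.Subset.refl _⟩
      · rintro ⟨h1, h2⟩
        refine ⟨h1, ?_⟩
        rintro ⟨x, hx, hsx⟩
        have := Finset.card_le_card hsx
        simp at this
        omega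
    rw [hcar]
    let e : Fin k ≃ {x // x ∈ A} := (finCongr hcard.symm).trans A.equivFin.symm
    let g : Fin k → Fin n := fun i => (e i : Fin n)
    have hg_inj : Function.Injective g := fun i j h => e.injective (Subtype.ext h)
    have hg_mem : ∀ i, g i ∈ A := fun i => (e i).2
    have hg_surj : ∀ a ∈ A, ∃ i, g i = a := fun a ha =>
      ⟨e.symm ⟨a, ha⟩, by simp [g]⟩
    let gE : Fin k ↪ Fin n := ⟨g, hg_inj⟩
    have hmp : ∀ s : Finset (Fin n), s ⊆ A →
        (s.preimage g hg_inj.injOn).map gE = s := by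
      intro s hs
      ext a
      simp only [Finset.mem_map, Finset.mem_preimage, gE, Function.Embedding.coeFn_mk]
      constructor
      · rintro ⟨i, hi, rfl⟩; exact hi
      · intro ha
        obtain ⟨i, rfl⟩ := hg_surj a (hs ha)
        exact ⟨i, ha, rfl⟩
    have hpm : ∀ t : Finset (Fin k), (t.map gE).preimage g hg_inj.injOn = t := by
      intro t
      ext i
      simp only [Finset.mem_preimage, Finset.mem_map, gE, Function.Embedding.coeFn_mk]
      constructor
      · rintro ⟨j, hj, hji⟩
        rwa [hg_inj hji] at hj
      · intro hi; exact ⟨i, hi, rfl⟩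
    have hcardp : ∀ s : Finset (Fin n), s ⊆ A →
        (s.preimage g hg_inj.injOn).card = s.card := by
      intro s hs
      conv_rhs => rw [← hmp s hs]
      rw [Finset.card_map]
    refine ⟨{ toFun := fun s => ⟨(s : Finset (Fin n)).preimage g hg_inj.injOn, ?_⟩,
              invFun := fun t => ⟨(t : Finset (Fin k)).map gE, ?_, ?_⟩,
              left_inv := ?_, right_inv := ?_, map_rel_iff' := ?_ }⟩
    · rw [hcardp _ s.2.1]; exact s.2.2
    · intro a ha
      simp only [Finset.mem_coe, Finset.mem_map, gE, Function.Embedding.coeFn_mk] at ha ⊢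
      obtain ⟨i, _, rfl⟩ := ha
      exact hg_mem i
    · rw [Finset.card_map]; exact t.2
    · rintro ⟨s, hs⟩
      exact Subtype.ext (hmp s hs.1)
    · rintro ⟨t, ht⟩
      exact Subtype.ext (hpm t)
    · rintro ⟨s, hs⟩ ⟨t, ht⟩
      simp only [Equiv.coe_fn_mk, Subtype.mk_le_mk]
      constructor
      · intro h
        have := (Finset.map_subset_map (f := gE)).mpr h
        rwa [hmp s hs.1, hmp t ht.1] at this
      · intro h i hi
        simp only [Finset.mem_preimage] at hi ⊢
        exact h hi
end

section
/- For every n ≥ 2, the Dedekind number b(n) satisfies b(n) = Σ over pairs (D,E) of down-sets of B(n−2) of (#{down-sets F of B(n−2) with F ⊆ D∩E}) · (#{down-sets G of B(n−2) with D∪E ⊆ G}). -/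
namespace Stmt15Aux

variable {m : ℕ}

def i0 (m : ℕ) : Fin (m + 2) := ⟨m, by omega⟩
def i1 (m : ℕ) : Fin (m + 2) := ⟨m + 1, by omega⟩

def embF (m : ℕ) : Fin m ↪ Fin (m + 2) := ⟨Fin.castAdd 2, Fin.castAdd_injective m 2⟩

def emb (s : Finset (Fin m)) : Finset (Fin (m + 2)) := s.map (embF m)

def q (b0 b1 : Bool) (s : Finset (Fin m)) : Finset (Fin (m + 2)) :=
  (cond b0 (insert (i0 m)) id) ((cond b1 (insert (i1 m)) id) (emb s))

def res (t : Finset (Fin (m + 2))) : Finset (Fin m) :=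
  Finset.univ.filter (fun i => Fin.castAdd 2 i ∈ t)

lemma mem_res {t : Finset (Fin (m + 2))} {i : Fin m} :
    i ∈ res t ↔ Fin.castAdd 2 i ∈ t := by simp [res]

lemma mem_q {b0 b1 : Bool} {s : Finset (Fin m)} {j : Fin (m + 2)} :
    j ∈ q b0 b1 s ↔ (b0 = true ∧ j = i0 m) ∨ (b1 = true ∧ j = i1 m) ∨
      ∃ i ∈ s, Fin.castAdd 2 i = j := by
  cases b0 <;> cases b1 <;> simp [q, emb, embF]

lemma castAdd_ne_i0 {i : Fin m} : Fin.castAdd 2 i ≠ i0 m := by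
  intro h
  have := congrArg Fin.val h
  simp [i0] at this
  omega

lemma castAdd_ne_i1 {i : Fin m} : Fin.castAdd 2 i ≠ i1 m := by
  intro h
  have := congrArg Fin.val h
  simp [i1] at this
  omega

lemma decomp (t : Finset (Fin (m + 2))) :
    q (decide (i0 m ∈ t)) (decide (i1 m ∈ t)) (res t) = t := by
  ext j
  rw [mem_q]
  constructor
  · rintro (⟨h, rfl⟩ | ⟨h, rfl⟩ | ⟨i, hi, rfl⟩)
    · exact of_decide_eq_true h
    · exact of_decide_eq_true h
    · exact mem_res.mp hi
  · intro hj
    by_cases h : (j : ℕ) < m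
    · refine Or.inr (Or.inr ⟨⟨j, h⟩, ?_, rfl⟩)
      rw [mem_res]
      exact hj
    · have h2 := j.isLt
      rcases (by omega : (j : ℕ) = m ∨ (j : ℕ) = m + 1) with h3 | h3
      · exact Or.inl ⟨decide_eq_true (by rwa [show i0 m = j from (Fin.ext h3.symm)]),
          (Fin.ext h3.symm).symm⟩
      · exact Or.inr (Or.inl ⟨decide_eq_true (by rwa [show i1 m = j from (Fin.ext h3.symm)]),
          (Fin.ext h3.symm).symm⟩)

lemma res_q {b0 b1 : Bool} {s : Finset (Fin m)} : res (q b0 b1 s) = s := by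
  ext i
  rw [mem_res, mem_q]
  constructor
  · rintro (⟨h, h'⟩ | ⟨h, h'⟩ | ⟨i', hi', h'⟩)
    · exact absurd h' castAdd_ne_i0
    · exact absurd h' castAdd_ne_i1
    · rwa [Fin.castAdd_inj.mp h'] at hi'
  · intro hi
    exact Or.inr (Or.inr ⟨i, hi, rfl⟩)

lemma ne_i0_i1 : i0 m ≠ i1 m := by
  intro h; have := congrArg Fin.val h; simp [i0, i1] at this

lemma i0_mem_q_iff {b0 b1 : Bool} {s : Finset (Fin m)} : i0 m ∈ q b0 b1 s ↔ b0 = true := by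
  rw [mem_q]
  simp [(ne_i0_i1 (m := m)), fun i => @castAdd_ne_i0 m i]

lemma i1_mem_q_iff {b0 b1 : Bool} {s : Finset (Fin m)} : i1 m ∈ q b0 b1 s ↔ b1 = true := by
  rw [mem_q]
  simp [(ne_i0_i1 (m := m)).symm, fun i => @castAdd_ne_i1 m i]

lemma i0_mem_q {b0 b1 : Bool} {s : Finset (Fin m)} : decide (i0 m ∈ q b0 b1 s) = b0 := by
  cases b0 <;> simp [i0_mem_q_iff]

lemma i1_mem_q {b0 b1 : Bool} {s : Finset (Fin m)} : decide (i1 m ∈ q b0 b1 s) = b1 := by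
  cases b1 <;> simp [i1_mem_q_iff]

lemma q_mono {b0 b1 : Bool} {s s' : Finset (Fin m)} (h : s ⊆ s') :
    q b0 b1 s ⊆ q b0 b1 s' := by
  intro j hj
  rw [mem_q] at hj ⊢
  rcases hj with h1 | h1 | ⟨i, hi, h1⟩
  · exact Or.inl h1
  · exact Or.inr (Or.inl h1)
  · exact Or.inr (Or.inr ⟨i, h hi, h1⟩)

lemma q_mono_bool {b0 b1 b0' b1' : Bool} {s : Finset (Fin m)}
    (h0 : b0 = true → b0' = true) (h1 : b1 = true → b1' = true) :
    q b0 b1 s ⊆ q b0' b1' s := by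
  intro j hj
  rw [mem_q] at hj ⊢
  rcases hj with ⟨hb, hj⟩ | ⟨hb, hj⟩ | hj
  · exact Or.inl ⟨h0 hb, hj⟩
  · exact Or.inr (Or.inl ⟨h1 hb, hj⟩)
  · exact Or.inr (Or.inr hj)

def comp (S : Set (Finset (Fin (m + 2)))) (b0 b1 : Bool) : Set (Finset (Fin m)) :=
  {s | q b0 b1 s ∈ S}

lemma comp_lower {S : Set (Finset (Fin (m + 2)))} (hS : IsLowerSet S) (b0 b1 : Bool) :
    IsLowerSet (comp S b0 b1) := by
  intro a b hba ha
  exact hS (q_mono hba) ha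

lemma comp_incl {S : Set (Finset (Fin (m + 2)))} (hS : IsLowerSet S) {b0 b1 b0' b1' : Bool}
    (h0 : b0 = true → b0' = true) (h1 : b1 = true → b1' = true) :
    comp S b0' b1' ⊆ comp S b0 b1 := by
  intro s hs
  exact hS (q_mono_bool h0 h1) hs

def T (c : Bool → Bool → Set (Finset (Fin m))) : Set (Finset (Fin (m + 2))) :=
  {t | res t ∈ c (decide (i0 m ∈ t)) (decide (i1 m ∈ t))}

lemma comp_T {c : Bool → Bool → Set (Finset (Fin m))} {b0 b1 : Bool} :
    comp (T c) b0 b1 = c b0 b1 := by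
  ext s
  simp only [comp, T, Set.mem_setOf_eq, res_q, i0_mem_q, i1_mem_q]

lemma T_comp {S : Set (Finset (Fin (m + 2)))} : T (comp S) = S := by
  ext t
  simp only [T, comp, Set.mem_setOf_eq, decomp]

lemma res_mono {t t' : Finset (Fin (m + 2))} (h : t ⊆ t') : res t ⊆ res t' := by
  intro i hi
  rw [mem_res] at hi ⊢
  exact h hi

lemma T_lower {c : Bool → Bool → Set (Finset (Fin m))}
    (hl : ∀ b0 b1, IsLowerSet (c b0 b1))
    (hmono : ∀ b0 b1 b0' b1', (b0' = true → b0 = true) → (b1' = true → b1 = true) →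
      c b0 b1 ⊆ c b0' b1') :
    IsLowerSet (T c) := by
  intro a b hba ha
  simp only [T, Set.mem_setOf_eq] at ha ⊢
  refine hl _ _ (res_mono hba) (hmono _ _ _ _ ?_ ?_ ha)
  · intro h; exact decide_eq_true (hba (of_decide_eq_true h))
  · intro h; exact decide_eq_true (hba (of_decide_eq_true h))

lemma fiber_heq {m : ℕ}
    {p p' : {D : Set (Finset (Fin m)) // IsLowerSet D} × {D : Set (Finset (Fin m)) // IsLowerSet D}}
    (h : p' = p)
    {y' : {F : Set (Finset (Fin m)) // IsLowerSet F ∧ F ⊆ (p'.1 : Set (Finset (Fin m))) ∩ (p'.2 : Set (Finset (Fin m)))} ×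
          {G : Set (Finset (Fin m)) // IsLowerSet G ∧ (p'.1 : Set (Finset (Fin m))) ∪ (p'.2 : Set (Finset (Fin m))) ⊆ G}}
    {y : {F : Set (Finset (Fin m)) // IsLowerSet F ∧ F ⊆ (p.1 : Set (Finset (Fin m))) ∩ (p.2 : Set (Finset (Fin m)))} ×
         {G : Set (Finset (Fin m)) // IsLowerSet G ∧ (p.1 : Set (Finset (Fin m))) ∪ (p.2 : Set (Finset (Fin m))) ⊆ G}}
    (h1 : (y'.1 : Set (Finset (Fin m))) = (y.1 : Set (Finset (Fin m))))
    (h2 : (y'.2 : Set (Finset (Fin m))) = (y.2 : Set (Finset (Fin m)))) :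
    HEq y' y := by
  subst h
  rw [heq_iff_eq]
  exact Prod.ext (Subtype.ext h1) (Subtype.ext h2)

def mainEquiv (m : ℕ) :
    {S : Set (Finset (Fin (m + 2))) // IsLowerSet S} ≃
      (p : {D : Set (Finset (Fin m)) // IsLowerSet D} ×
           {D : Set (Finset (Fin m)) // IsLowerSet D}) ×
        ({F : Set (Finset (Fin m)) // IsLowerSet F ∧ F ⊆ (p.1 : Set (Finset (Fin m))) ∩ (p.2 : Set (Finset (Fin m)))} ×
         {G : Set (Finset (Fin m)) // IsLowerSet G ∧ (p.1 : Set (Finset (Fin m))) ∪ (p.2 : Set (Finset (Fin m))) ⊆ G}) where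
  toFun S :=
    ⟨(⟨comp S.1 true false, comp_lower S.2 _ _⟩, ⟨comp S.1 false true, comp_lower S.2 _ _⟩),
      ⟨comp S.1 true true, comp_lower S.2 _ _,
        Set.subset_inter (comp_incl S.2 (fun h => h) (fun h => rfl))
          (comp_incl S.2 (fun h => rfl) (fun h => h))⟩,
      ⟨comp S.1 false false, comp_lower S.2 _ _,
        Set.union_subset (comp_incl S.2 (fun h => absurd h Bool.false_ne_true) (fun h => h))
          (comp_incl S.2 (fun h => absurd h Bool.false_ne_true) (fun h => absurd h Bool.false_ne_true))⟩⟩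
  invFun x :=
    ⟨T (fun b0 b1 => cond b0 (cond b1 x.2.1.1 x.1.1.1) (cond b1 x.1.2.1 x.2.2.1)),
      T_lower
        (by rintro (_ | _) (_ | _) <;>
          first
          | exact x.2.2.2.1
          | exact x.1.2.2
          | exact x.1.1.2
          | exact x.2.1.2.1)
        (by
          rintro (_ | _) (_ | _) (_ | _) (_ | _) h0 h1 <;>
            simp only [cond_true, cond_false] <;>
            first
            | (exact subset_rfl)
            | (exact absurd (h0 rfl) Bool.false_ne_true)
            | (exact absurd (h1 rfl) Bool.false_ne_true)
            | (exact Set.union_subset_iff.mp x.2.2.2.2 |>.1)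
            | (exact Set.union_subset_iff.mp x.2.2.2.2 |>.2)
            | (exact (Set.subset_inter_iff.mp x.2.1.2.2).1)
            | (exact (Set.subset_inter_iff.mp x.2.1.2.2).2)
            | (exact ((Set.subset_inter_iff.mp x.2.1.2.2).1).trans
                (Set.union_subset_iff.mp x.2.2.2.2).1)
            | (exact ((Set.subset_inter_iff.mp x.2.1.2.2).2).trans
                (Set.union_subset_iff.mp x.2.2.2.2).2))⟩
  left_inv := by
    rintro ⟨S, hS⟩
    apply Subtype.ext
    have hc : (fun b0 b1 => cond b0 (cond b1 (comp S true true) (comp S true false))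
        (cond b1 (comp S false true) (comp S false false))) = comp S := by
      funext b0 b1
      cases b0 <;> cases b1 <;> rfl
    simpa only [hc] using (T_comp (S := S))
  right_inv := by
    rintro ⟨p, y⟩
    refine Sigma.ext ?_ (fiber_heq ?_ ?_ ?_)
    · apply Prod.ext <;> apply Subtype.ext <;> simp only [comp_T, cond_true, cond_false]
    · apply Prod.ext <;> apply Subtype.ext <;> simp only [comp_T, cond_true, cond_false]
    · simp only [comp_T, cond_true, cond_false]
    · simp only [comp_T, cond_true, cond_false]

lemma natcard_sigma {ι : Type*} [Finite ι] (f : ι → Type*) [∀ i, Finite (f i)] :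
    Nat.card ((i : ι) × f i) = ∑ᶠ i, Nat.card (f i) := by
  classical
  cases nonempty_fintype ι
  letI : ∀ i, Fintype (f i) := fun i => Fintype.ofFinite (f i)
  rw [finsum_eq_sum_of_fintype, Nat.card_eq_fintype_card, Fintype.card_sigma]
  exact Finset.sum_congr rfl (fun i _ => (Nat.card_eq_fintype_card).symm)

end Stmt15Aux

theorem stmt15 (n : ℕ) (hn : 2 ≤ n) :
    Nat.card {D : Set (Finset (Fin n)) // IsLowerSet D} =
      ∑ᶠ p : {D : Set (Finset (Fin (n - 2))) // IsLowerSet D} ×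
             {D : Set (Finset (Fin (n - 2))) // IsLowerSet D},
        Nat.card {F : Set (Finset (Fin (n - 2))) //
            IsLowerSet F ∧ F ⊆ (p.1 : Set (Finset (Fin (n - 2)))) ∩ (p.2 : Set (Finset (Fin (n - 2))))} *
        Nat.card {G : Set (Finset (Fin (n - 2))) //
            IsLowerSet G ∧ (p.1 : Set (Finset (Fin (n - 2)))) ∪ (p.2 : Set (Finset (Fin (n - 2)))) ⊆ G} := by
  obtain ⟨m, rfl⟩ : ∃ m, n = m + 2 := ⟨n - 2, by omega⟩
  rw [Nat.card_congr (Stmt15Aux.mainEquiv m), Stmt15Aux.natcard_sigma]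
  exact finsum_congr fun p => Nat.card_prod _ _
end
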